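/- Let B be a brace and let G = (B,+) ⋊_λ (B,·) be the semidirect product of the additive group by the multiplicative group with respect to the action λ. If B is a supersoluble brace, then G is a supersoluble group; in particular, (B,+) and (B,·) are supersoluble groups. -/
import Mathlib


/-- A (skew left) brace: a set with an additive group structure (not necessarily abelian)
and a multiplicative group structure sharing the same identity, satisfying the skew
distributive law `a * (b + c) = a * b + -a + a * c`. -/
class SkewBrace (B : Type*) extends AddGroup B, Group B where
  one_eq_zero : (1 : B) = (0 : B)
  skew_distrib : ∀ a b c : B, a * (b + c) = a * b + -a + a * c

/-- A group is supersoluble if it has a finite chain of normal subgroups with all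
factors cyclic. -/
def Group.IsSupersoluble (G : Type*) [Group G] : Prop :=
  ∃ (n : ℕ) (H : ℕ → Subgroup G),
    H 0 = ⊥ ∧ H n = ⊤ ∧ (∀ i, (H i).Normal) ∧ (∀ i, i < n → H i ≤ H (i + 1)) ∧
    ∀ i, i < n → ∃ x ∈ H (i + 1), ∀ y ∈ H (i + 1), ∃ k : ℤ, (x ^ k)⁻¹ * y ∈ H i

namespace SkewBrace

variable {B : Type*} [SkewBrace B]

/-- `lam a b = -a + a * b`, i.e. `λ_a(b)`. -/
def lam (a b : B) : B := -a + a * b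

/-- the star operation `a ∗ b = λ_a(b) - b`. -/
def starOp (a b : B) : B := lam a b + -b

/-- the additive commutator `[a,b]_+`. -/
def addCommutator (a b : B) : B := -a + -b + a + b

/-- A subbrace of `B`: a subset that is a subgroup of both `(B,+)` and `(B,·)`. -/
structure Subbrace (B : Type*) [SkewBrace B] where
  carrier : Set B
  zero_mem : (0 : B) ∈ carrier
  add_mem : ∀ {a b : B}, a ∈ carrier → b ∈ carrier → a + b ∈ carrier
  neg_mem : ∀ {a : B}, a ∈ carrier → -a ∈ carrier
  mul_mem : ∀ {a b : B}, a ∈ carrier → b ∈ carrier → a * b ∈ carrier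
  inv_mem : ∀ {a : B}, a ∈ carrier → a⁻¹ ∈ carrier

/-- An ideal of `B`: a subbrace that is normal in `(B,+)` and in `(B,·)` and is
invariant under all the maps `λ_b`. -/
structure BraceIdeal (B : Type*) [SkewBrace B] extends Subbrace B where
  addConj_mem : ∀ (b : B) {a : B}, a ∈ carrier → b + a + -b ∈ carrier
  mulConj_mem : ∀ (b : B) {a : B}, a ∈ carrier → b * a * b⁻¹ ∈ carrier
  lam_mem : ∀ (b : B) {a : B}, a ∈ carrier → lam b a ∈ carrier

/-- The additive subgroup underlying a subbrace. -/
def Subbrace.addSubgroup (S : Subbrace B) : AddSubgroup B where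
  carrier := S.carrier
  zero_mem' := S.zero_mem
  add_mem' := S.add_mem
  neg_mem' := S.neg_mem

/-- The multiplicative subgroup underlying a subbrace. -/
def Subbrace.subgroup (S : Subbrace B) : Subgroup B where
  carrier := S.carrier
  one_mem' := by rw [one_eq_zero]; exact S.zero_mem
  mul_mem' := S.mul_mem
  inv_mem' := S.inv_mem

/-- Given ideals `J ≤ I` of `B`, `MemSocQuotRel I J x` says that the coset of `x`
lies in `Soc(I/J) = Ker(λ) ∩ Z(I/J, +)` (for `I = B` take `I = Set.univ`). -/
def MemSocQuotRel (I J : Set B) (x : B) : Prop :=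
  x ∈ I ∧ (∀ y ∈ I, -y + lam x y ∈ J) ∧ ∀ y ∈ I, -(y + x) + (x + y) ∈ J

/-- Given ideals `J ≤ I` of `B`, `MemZetaQuotRel I J x` says that the coset of `x`
lies in `ζ(I/J) = Soc(I/J) ∩ Z(I/J, ·)`. -/
def MemZetaQuotRel (I J : Set B) (x : B) : Prop :=
  MemSocQuotRel I J x ∧ ∀ y ∈ I, (y * x)⁻¹ * (x * y) ∈ J

/-- The coset of `x` lies in `Soc(B/J)`. -/
def MemSocQuot (J : Set B) (x : B) : Prop := MemSocQuotRel Set.univ J x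

/-- The coset of `x` lies in `ζ(B/J)`. -/
def MemZetaQuot (J : Set B) (x : B) : Prop := MemZetaQuotRel Set.univ J x

/-- For ideals `I ≤ J`, the additive group of the quotient `J/I` is infinite cyclic. -/
def QuotAddInfCyclic (I J : Set B) : Prop :=
  ∃ x ∈ J, (∀ y ∈ J, ∃ n : ℤ, -(n • x) + y ∈ I) ∧ ∀ n : ℤ, n • x ∈ I → n = 0

/-- For ideals `I ≤ J`, the quotient `J/I` has prime order `p`. -/
def QuotPrimeOrder (I J : Set B) (p : ℕ) : Prop :=
  p.Prime ∧ ∃ x ∈ J, x ∉ I ∧ p • x ∈ I ∧ ∀ y ∈ J, ∃ n : ℤ, -(n • x) + y ∈ I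

/-- A brace is supersoluble if it has a finite chain of ideals each factor of which
either is additively infinite cyclic and contained in the socle of the corresponding
quotient, or has prime order. -/
def IsSupersoluble (B : Type*) [SkewBrace B] : Prop :=
  ∃ (n : ℕ) (I : ℕ → BraceIdeal B),
    (I 0).carrier = {0} ∧ (I n).carrier = Set.univ ∧
    (∀ i, i < n → (I i).carrier ⊆ (I (i + 1)).carrier) ∧
    ∀ i, i < n →
      (QuotAddInfCyclic (I i).carrier (I (i + 1)).carrier ∧
        ∀ x ∈ (I (i + 1)).carrier, MemSocQuot (I i).carrier x) ∨
      ∃ p : ℕ, QuotPrimeOrder (I i).carrier (I (i + 1)).carrier p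

/-- The upper socle series of the brace (carrier of the ideal) `I`. -/
def socChainRel (I : Set B) : ℕ → Set B
  | 0 => {0}
  | n + 1 => {x | MemSocQuotRel I (socChainRel I n) x}

/-- The upper central series of the brace (carrier of the ideal) `I`. -/
def zetaChainRel (I : Set B) : ℕ → Set B
  | 0 => {0}
  | n + 1 => {x | MemZetaQuotRel I (zetaChainRel I n) x}

/-- The upper socle series `Soc_n(B)` of `B`. -/
def socChain (B : Type*) [SkewBrace B] : ℕ → Set B := socChainRel Set.univ

/-- The upper central series `ζ_n(B)` of `B`. -/
def zetaChain (B : Type*) [SkewBrace B] : ℕ → Set B := zetaChainRel Set.univ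

/-- A brace is centrally nilpotent if its upper central series reaches `B`. -/
def IsCentrallyNilpotent (B : Type*) [SkewBrace B] : Prop :=
  ∃ m : ℕ, zetaChain B m = Set.univ

end SkewBrace

namespace SkewBrace

variable {B : Type*} [SkewBrace B]

theorem mul_zero_right (x : B) : x * (0 : B) = x := by
  rw [← one_eq_zero, mul_one]

theorem lam_add (a b c : B) : lam a (b + c) = lam a b + lam a c := by
  simp only [lam, skew_distrib]
  simp [add_assoc]

theorem lam_zero (a : B) : lam a (0 : B) = 0 := by
  simp [lam, mul_zero_right]

theorem lam_one_apply (b : B) : lam (1 : B) b = b := by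
  simp only [lam, one_mul]
  rw [one_eq_zero, neg_zero, zero_add]

theorem lam_neg (a b : B) : lam a (-b) = -lam a b := by
  have h : lam a b + lam a (-b) = 0 := by
    rw [← lam_add, add_neg_cancel, lam_zero]
  exact (neg_eq_of_add_eq_zero_right h).symm

theorem mul_neg_right (x y : B) : x * (-y) = x + -(x * y) + x := by
  have h := lam_neg x y
  simp only [lam] at h
  rw [neg_add_rev, neg_neg] at h
  calc x * (-y) = x + (-x + x * (-y)) := by rw [← add_assoc, add_neg_cancel, zero_add]
    _ = x + (-(x * y) + x) := by rw [h]
    _ = x + -(x * y) + x := by rw [add_assoc]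

theorem lam_mul (x y b : B) : lam (x * y) b = lam x (lam y b) := by
  simp only [lam]
  rw [skew_distrib, mul_neg_right]
  simp [add_assoc, neg_add_cancel_left, add_neg_cancel_left, mul_assoc]

/-- `λ_a` as an automorphism of the additive group `(B,+)`. -/
def lamAut (a : B) : AddAut B where
  toFun := lam a
  invFun := lam a⁻¹
  left_inv := fun b => by rw [← lam_mul, inv_mul_cancel, lam_one_apply]
  right_inv := fun b => by rw [← lam_mul, mul_inv_cancel, lam_one_apply]
  map_add' := lam_add a

/-- The homomorphism `λ : (B,·) → Aut(B,+)`, valued in the automorphisms of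
`Multiplicative B` (which is `(B,+)` written multiplicatively). -/
def lamHomMul (B : Type*) [SkewBrace B] : B →* MulAut (Multiplicative B) where
  toFun a := AddEquiv.toMultiplicative (lamAut a)
  map_one' := by
    ext b
    exact lam_one_apply (Multiplicative.toAdd b)
  map_mul' := fun x y => by
    ext b
    exact lam_mul x y (Multiplicative.toAdd b)


section Aux

theorem mul_eq_add_lam (a b : B) : a * b = a + lam a b := by
  rw [lam, add_neg_cancel_left]

theorem BraceIdeal.nsmul_mem' (Jd : BraceIdeal B) {a : B} (h : a ∈ Jd.carrier) (k : ℕ) :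
    k • a ∈ Jd.carrier := by
  induction k with
  | zero => simpa using Jd.zero_mem
  | succ k ih => rw [succ_nsmul]; exact Jd.add_mem ih h

theorem BraceIdeal.zsmul_mem' (Jd : BraceIdeal B) {a : B} (h : a ∈ Jd.carrier) (k : ℤ) :
    k • a ∈ Jd.carrier := by
  cases k with
  | ofNat m => simpa using Jd.nsmul_mem' h m
  | negSucc m => rw [negSucc_zsmul]; exact Jd.neg_mem (Jd.nsmul_mem' h (m + 1))

theorem BraceIdeal.inv_mul_mem (Jd : BraceIdeal B) {b y : B} (h : -b + y ∈ Jd.carrier) :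
    b⁻¹ * y ∈ Jd.carrier := by
  have key : lam b⁻¹ (-b + y) = b⁻¹ * y := by
    rw [lam_add, lam_neg]
    have h1 : lam b⁻¹ b = -b⁻¹ := by
      rw [lam, inv_mul_cancel, one_eq_zero, add_zero]
    rw [h1, neg_neg, lam, add_neg_cancel_left]
  rw [← key]; exact Jd.lam_mem _ h

theorem BraceIdeal.neg_add_mem (Jd : BraceIdeal B) {b y : B} (h : b⁻¹ * y ∈ Jd.carrier) :
    -b + y ∈ Jd.carrier := by
  have key : lam b (b⁻¹ * y) = -b + y := by rw [lam, mul_inv_cancel_left]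
  rw [← key]; exact Jd.lam_mem _ h

theorem lam_pow_congr (Jd : BraceIdeal B) {x : B}
    (h1 : ∀ y : B, -y + lam x y ∈ Jd.carrier) :
    ∀ (k : ℕ) (y : B), -y + lam (x ^ k) y ∈ Jd.carrier := by
  intro k
  induction k with
  | zero => intro y; rw [pow_zero, lam_one_apply]; simpa using Jd.zero_mem
  | succ k ih =>
    intro y
    rw [pow_succ', lam_mul]
    have key : -y + lam x (lam (x ^ k) y) =
        (-y + lam (x ^ k) y) + (-(lam (x ^ k) y) + lam x (lam (x ^ k) y)) := by
      rw [add_assoc, add_neg_cancel_left]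
    rw [key]
    exact Jd.add_mem (ih y) (h1 _)

theorem soc_pow (Jd : BraceIdeal B) {x : B}
    (h1 : ∀ y : B, -y + lam x y ∈ Jd.carrier) :
    ∀ k : ℕ, -(k • x) + x ^ k ∈ Jd.carrier := by
  intro k
  induction k with
  | zero => simpa [one_eq_zero] using Jd.zero_mem
  | succ k ih =>
    have hx : x ^ (k + 1) = x + lam x (x ^ k) := by rw [pow_succ', mul_eq_add_lam]
    have key : -((k + 1) • x) + x ^ (k + 1) =
        (-(k • x) + x ^ k) + (-(x ^ k) + lam x (x ^ k)) := by
      rw [hx, succ_nsmul', neg_add_rev]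
      rw [add_assoc, add_assoc, neg_add_cancel_left, ← add_assoc, add_assoc,
        add_neg_cancel_left]
    rw [key]
    exact Jd.add_mem ih (h1 _)

theorem inv_congr (Jd : BraceIdeal B) {a b : B} (hba : -b + a ∈ Jd.carrier)
    (hlam : ∀ y : B, -y + lam a y ∈ Jd.carrier) : b + a⁻¹ ∈ Jd.carrier := by
  have hj1 : a * (-a) ∈ Jd.carrier := by
    have h := hlam (-a)
    rw [neg_neg] at h
    rw [mul_eq_add_lam]
    exact h
  have ha : a⁻¹ = (-a) * (a * (-a))⁻¹ := by
    rw [mul_inv_rev, mul_inv_cancel_left]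
  have h3 : lam (-a) ((a * (-a))⁻¹) ∈ Jd.carrier := Jd.lam_mem _ (Jd.inv_mem hj1)
  have h4 : b + -a ∈ Jd.carrier := by
    have h5 : -a + b ∈ Jd.carrier := by
      have := Jd.neg_mem hba
      rwa [neg_add_rev, neg_neg] at this
    have h6 := Jd.addConj_mem b h5
    have : b + (-a + b) + -b = b + -a := by
      rw [← add_assoc, add_assoc, add_neg_cancel, add_zero]
    rwa [this] at h6
  have key : b + a⁻¹ = (b + -a) + lam (-a) ((a * (-a))⁻¹) := by
    rw [ha, mul_eq_add_lam, add_assoc]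
  rw [key]
  exact Jd.add_mem h4 h3

theorem soc_zpow (Jd : BraceIdeal B) {x : B}
    (h1 : ∀ y : B, -y + lam x y ∈ Jd.carrier) :
    ∀ k : ℤ, -(k • x) + x ^ k ∈ Jd.carrier := by
  intro k
  cases k with
  | ofNat m => simpa using soc_pow Jd h1 m
  | negSucc m =>
    rw [zpow_negSucc, negSucc_zsmul, neg_neg]
    exact inv_congr Jd (soc_pow Jd h1 (m + 1)) (lam_pow_congr Jd h1 (m + 1))

theorem keyA (Jd Id : BraceIdeal B) (hQ : QuotAddInfCyclic Jd.carrier Id.carrier)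
    (hsoc : ∀ x ∈ Id.carrier, MemSocQuot Jd.carrier x) :
    ∃ x ∈ Id.carrier, ∀ y ∈ Id.carrier, ∃ k : ℤ, (x ^ k)⁻¹ * y ∈ Jd.carrier := by
  obtain ⟨x, hxI, hgen, -⟩ := hQ
  have h1 : ∀ y : B, -y + lam x y ∈ Jd.carrier := fun y =>
    (hsoc x hxI).2.1 y (Set.mem_univ y)
  refine ⟨x, hxI, fun y hy => ?_⟩
  obtain ⟨k, hk⟩ := hgen y hy
  refine ⟨k, Jd.inv_mul_mem ?_⟩
  have h2 := soc_zpow Jd h1 k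
  have key : -(x ^ k) + y = -(-(k • x) + x ^ k) + (-(k • x) + y) := by
    rw [neg_add_rev, neg_neg, add_assoc, ← add_assoc (k • x), add_neg_cancel, zero_add]
  rw [key]
  exact Jd.add_mem (Jd.neg_mem h2) hk

theorem keyB (Jd Id : BraceIdeal B) {p : ℕ}
    (hQ : QuotPrimeOrder Jd.carrier Id.carrier p) :
    ∃ x ∈ Id.carrier, ∀ y ∈ Id.carrier, ∃ k : ℤ, (x ^ k)⁻¹ * y ∈ Jd.carrier := by
  obtain ⟨hp, x, hxI, hxJ, hpx, hgen⟩ := hQ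
  haveI : NeZero p := ⟨hp.ne_zero⟩
  -- divisibility facts
  have hdvd1 : ∀ c : ℤ, (p : ℤ) ∣ c → c • x ∈ Jd.carrier := by
    rintro c ⟨q, rfl⟩
    rw [mul_comm, mul_zsmul, natCast_zsmul]
    exact Jd.zsmul_mem' hpx q
  have hdvd2 : ∀ c : ℤ, c • x ∈ Jd.carrier → (p : ℤ) ∣ c := by
    intro c hc
    by_contra hnd
    have hcop : IsCoprime (p : ℤ) c :=
      (Prime.coprime_iff_not_dvd (Nat.prime_iff_prime_int.mp hp)).mpr hnd
    obtain ⟨u, v, huv⟩ := hcop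
    have hx0 : x ∈ Jd.carrier := by
      have h1 : (u * (p : ℤ) + v * c) • x = x := by rw [huv, one_zsmul]
      rw [← h1, add_zsmul, mul_zsmul, mul_zsmul, natCast_zsmul]
      exact Jd.add_mem (Jd.zsmul_mem' hpx u) (Jd.zsmul_mem' hc v)
    exact hxJ hx0
  -- set up the multiplicative quotient
  let N : Subgroup B := Jd.toSubbrace.subgroup
  haveI hN : N.Normal := ⟨fun a ha g => Jd.mulConj_mem g ha⟩
  let S : Subgroup (B ⧸ N) := Id.toSubbrace.subgroup.map (QuotientGroup.mk' N)
  have hmemS : ∀ c : ℕ, ((c • x : B) : B ⧸ N) ∈ S := fun c =>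
    Subgroup.mem_map.mpr ⟨c • x, Id.nsmul_mem' hxI c, rfl⟩
  let e : ZMod p → S := fun c => ⟨((c.val • x : B) : B ⧸ N), hmemS c.val⟩
  have hmk : ∀ a b : B, -a + b ∈ Jd.carrier → ((a : B ⧸ N) = (b : B ⧸ N)) := fun a b hab =>
    (QuotientGroup.eq (s := N)).mpr (Jd.inv_mul_mem hab)
  have hmk' : ∀ a b : B, ((a : B ⧸ N) = (b : B ⧸ N)) → -a + b ∈ Jd.carrier := fun a b hab =>
    Jd.neg_add_mem ((QuotientGroup.eq (s := N)).mp hab)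
  have hinj : Function.Injective e := by
    intro c₁ c₂ hc
    have h1 : -((c₁.val : ℕ) • x) + (c₂.val : ℕ) • x ∈ Jd.carrier :=
      hmk' _ _ (congrArg Subtype.val hc)
    have h2 : (-(c₁.val : ℤ) + (c₂.val : ℤ)) • x ∈ Jd.carrier := by
      rw [add_zsmul, neg_zsmul, natCast_zsmul, natCast_zsmul]
      exact h1
    have h3 := hdvd2 _ h2
    have h4 : (-(c₁.val : ℤ) + (c₂.val : ℤ)) = 0 := by
      refine Int.eq_zero_of_dvd_of_natAbs_lt_natAbs h3 ?_
      have b1 := ZMod.val_lt c₁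
      have b2 := ZMod.val_lt c₂
      omega
    exact ZMod.val_injective p (by omega)
  have hsurj : Function.Surjective e := by
    rintro ⟨s, hs⟩
    obtain ⟨y, hyI, rfl⟩ := Subgroup.mem_map.mp hs
    obtain ⟨k, hk⟩ := hgen y hyI
    have hppos : (0 : ℤ) < (p : ℤ) := by exact_mod_cast hp.pos
    set r : ℕ := (k % (p : ℤ)).toNat with hrdef
    have hr : (r : ℤ) = k % (p : ℤ) := Int.toNat_of_nonneg (Int.emod_nonneg k (by omega))
    have hrlt : r < p := by
      have := Int.emod_lt_of_pos k hppos
      omega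
    have hd : (p : ℤ) ∣ (-(r : ℤ) + k) := ⟨k / (p : ℤ), by rw [hr, Int.emod_def]; ring⟩
    have h5 := hdvd1 _ hd
    have h6 : -(r • x) + y ∈ Jd.carrier := by
      have heq : ((-(r : ℤ) + k) • x) + (-(k • x) + y) = -(r • x) + y := by
        rw [add_zsmul, neg_zsmul, natCast_zsmul, add_assoc, ← add_assoc (k • x),
          add_neg_cancel, zero_add]
      rw [← heq]
      exact Jd.add_mem h5 hk
    refine ⟨(r : ZMod p), ?_⟩
    apply Subtype.ext
    show (((r : ZMod p).val • x : B) : B ⧸ N) = _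
    rw [ZMod.val_cast_of_lt hrlt]
    exact hmk _ _ h6
  have hcard : Nat.card S = p := by
    rw [← Nat.card_eq_of_bijective e ⟨hinj, hsurj⟩, Nat.card_zmod]
  haveI : Finite S := Nat.finite_of_card_ne_zero (by rw [hcard]; exact hp.ne_zero)
  let s₀ : S := ⟨(x : B ⧸ N), Subgroup.mem_map.mpr ⟨x, hxI, rfl⟩⟩
  have hord : orderOf s₀ ∣ p := hcard ▸ orderOf_dvd_natCard s₀
  have hne : orderOf s₀ ≠ 1 := by
    intro h
    have h1 : s₀ = 1 := orderOf_eq_one_iff.mp h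
    have h2 : (x : B ⧸ N) = 1 := congrArg Subtype.val h1
    exact hxJ ((QuotientGroup.eq_one_iff x).mp h2)
  have hordp : orderOf s₀ = p := (hp.eq_one_or_self_of_dvd _ hord).resolve_left hne
  have htop : Subgroup.zpowers s₀ = ⊤ := by
    apply Subgroup.eq_top_of_card_eq
    rw [Nat.card_zpowers, hordp, hcard]
  refine ⟨x, hxI, fun y hy => ?_⟩
  have hyS : ((y : B) : B ⧸ N) ∈ S := Subgroup.mem_map.mpr ⟨y, hy, rfl⟩
  have hmem : (⟨((y : B) : B ⧸ N), hyS⟩ : S) ∈ Subgroup.zpowers s₀ :=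
    htop ▸ Subgroup.mem_top _
  obtain ⟨k, hk⟩ := Subgroup.mem_zpowers_iff.mp hmem
  refine ⟨k, ?_⟩
  have hq : ((x ^ k : B) : B ⧸ N) = ((y : B) : B ⧸ N) := by
    have h1 := congrArg Subtype.val hk
    simpa using h1
  exact (QuotientGroup.eq (s := N)).mp hq

/-- The subgroup of `Multiplicative B` corresponding to an ideal. -/
def idealMulSubgroup (Jd : BraceIdeal B) : Subgroup (Multiplicative B) where
  carrier := {g | Multiplicative.toAdd g ∈ Jd.carrier}
  one_mem' := Jd.zero_mem
  mul_mem' := fun ha hb => Jd.add_mem ha hb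
  inv_mem' := fun ha => Jd.neg_mem ha

end Aux

/-- If `B` is a supersoluble brace, then the semidirect product
`G = (B,+) ⋊_λ (B,·)` is a supersoluble group; in particular, `(B,+)` and `(B,·)`
are supersoluble groups. -/
theorem supersoluble_semidirectProduct (B : Type*) [SkewBrace B]
    (hB : IsSupersoluble B) :
    Group.IsSupersoluble (Multiplicative B ⋊[lamHomMul B] B) ∧
      Group.IsSupersoluble (Multiplicative B) ∧ Group.IsSupersoluble B := by
  obtain ⟨n, I, h0, htop, hchain, hfac⟩ := hB
  have key : ∀ i, i < n → ∃ x ∈ (I (i + 1)).carrier, ∀ y ∈ (I (i + 1)).carrier,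
      ∃ k : ℤ, (x ^ k)⁻¹ * y ∈ (I i).carrier := by
    intro i hi
    rcases hfac i hi with ⟨hQ, hsoc⟩ | ⟨p, hQ⟩
    · exact keyA _ _ hQ hsoc
    · exact keyB _ _ hQ
  have keyAdd : ∀ i, i < n → ∃ x ∈ (I (i + 1)).carrier, ∀ y ∈ (I (i + 1)).carrier,
      ∃ k : ℤ, -(k • x) + y ∈ (I i).carrier := by
    intro i hi
    rcases hfac i hi with ⟨⟨x, hx, hgen, -⟩, -⟩ | ⟨p, -, x, hx, -, -, hgen⟩
    · exact ⟨x, hx, hgen⟩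
    · exact ⟨x, hx, hgen⟩
  -- the multiplicative group
  have hM : Group.IsSupersoluble B := by
    refine ⟨n, fun i => (I i).toSubbrace.subgroup, ?_, ?_,
      fun i => ⟨fun a ha g => (I i).mulConj_mem g ha⟩,
      fun i hi y hy => hchain i hi hy, fun i hi => key i hi⟩
    · ext g
      rw [Subgroup.mem_bot]
      show g ∈ (I 0).carrier ↔ g = 1
      rw [h0, one_eq_zero]
      exact Set.mem_singleton_iff
    · rw [Subgroup.eq_top_iff']
      intro g
      show g ∈ (I n).carrier
      rw [htop]; trivial
  -- the additive group
  have hA : Group.IsSupersoluble (Multiplicative B) := by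
    refine ⟨n, fun i => idealMulSubgroup (I i), ?_, ?_,
      fun i => ⟨fun a ha g => (I i).addConj_mem _ ha⟩,
      fun i hi y hy => hchain i hi hy, ?_⟩
    · ext g
      rw [Subgroup.mem_bot]
      show Multiplicative.toAdd g ∈ (I 0).carrier ↔ g = 1
      rw [h0, Set.mem_singleton_iff]
      constructor
      · intro h; exact Multiplicative.toAdd.injective (by simpa using h)
      · rintro rfl; simp
    · rw [Subgroup.eq_top_iff']
      intro g
      show Multiplicative.toAdd g ∈ (I n).carrier
      rw [htop]; trivial
    · intro i hi
      obtain ⟨x, hx, hgen⟩ := keyAdd i hi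
      refine ⟨Multiplicative.ofAdd x, hx, fun y hy => ?_⟩
      obtain ⟨k, hk⟩ := hgen (Multiplicative.toAdd y) hy
      refine ⟨k, ?_⟩
      show Multiplicative.toAdd ((Multiplicative.ofAdd x ^ k)⁻¹ * y) ∈ (I i).carrier
      have h2 : Multiplicative.toAdd ((Multiplicative.ofAdd x ^ k)⁻¹ * y)
          = -(k • x) + Multiplicative.toAdd y := by simp
      rw [h2]; exact hk
  -- the semidirect product
  have hG : Group.IsSupersoluble (Multiplicative B ⋊[lamHomMul B] B) := by
    set φ := lamHomMul B with hφ
    let LA : BraceIdeal B → Subgroup (Multiplicative B ⋊[φ] B) := fun Jd =>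
      (idealMulSubgroup Jd).map SemidirectProduct.inl
    let LF : BraceIdeal B → Subgroup (Multiplicative B ⋊[φ] B) := fun Jd =>
      (Jd.toSubbrace.subgroup).comap SemidirectProduct.rightHom
    have hLAnorm : ∀ Jd : BraceIdeal B, (LA Jd).Normal := by
      intro Jd
      constructor
      intro h hh g
      obtain ⟨a, ha, rfl⟩ := Subgroup.mem_map.mp hh
      refine Subgroup.mem_map.mpr ⟨g.left * φ g.right a * g.left⁻¹, ?_, ?_⟩
      · show Multiplicative.toAdd (g.left * φ g.right a * g.left⁻¹) ∈ Jd.carrier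
        have heq : Multiplicative.toAdd (g.left * φ g.right a * g.left⁻¹)
            = Multiplicative.toAdd g.left + lam g.right (Multiplicative.toAdd a)
              + -(Multiplicative.toAdd g.left) := rfl
        rw [heq]
        exact Jd.addConj_mem _ (Jd.lam_mem _ ha)
      · refine SemidirectProduct.ext ?_ ?_ <;>
          simp [mul_assoc]
    have hLAtop : LA (I n) = LF (I 0) := by
      have h1 : idealMulSubgroup (I n) = ⊤ := by
        rw [Subgroup.eq_top_iff']
        intro g
        show Multiplicative.toAdd g ∈ (I n).carrier
        rw [htop]; trivial
      have h2 : (I 0).toSubbrace.subgroup = ⊥ := by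
        ext g
        rw [Subgroup.mem_bot]
        show g ∈ (I 0).carrier ↔ g = 1
        rw [h0, one_eq_zero]
        exact Set.mem_singleton_iff
      show (idealMulSubgroup (I n)).map _ = Subgroup.comap _ _
      rw [h1, h2, ← MonoidHom.range_eq_map, SemidirectProduct.range_inl_eq_ker_rightHom]
      ext g
      simp [MonoidHom.mem_ker]
    refine ⟨n + n, fun i => if i ≤ n then LA (I i) else LF (I (i - n)), ?_, ?_, ?_, ?_, ?_⟩
    · show (if 0 ≤ n then LA (I 0) else LF (I (0 - n))) = ⊥
      rw [if_pos (Nat.zero_le n)]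
      have h2 : idealMulSubgroup (I 0) = ⊥ := by
        ext g
        rw [Subgroup.mem_bot]
        show Multiplicative.toAdd g ∈ (I 0).carrier ↔ g = 1
        rw [h0, Set.mem_singleton_iff]
        constructor
        · intro h; exact Multiplicative.toAdd.injective (by simpa using h)
        · rintro rfl; simp
      show (idealMulSubgroup (I 0)).map _ = ⊥
      rw [h2, Subgroup.map_bot]
    · by_cases hn : n = 0
      · subst hn
        have hall : ∀ b : B, b = 0 := by
          intro b
          have hb : b ∈ (I 0).carrier := by rw [htop]; trivial
          rwa [h0, Set.mem_singleton_iff] at hb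
        haveI : Subsingleton B := ⟨fun a b => (hall a).trans (hall b).symm⟩
        haveI : Subsingleton (Multiplicative B) :=
          ⟨fun a b => Multiplicative.toAdd.injective (Subsingleton.elim _ _)⟩
        rw [Subgroup.eq_top_iff']
        intro g
        have hg1 : g = 1 :=
          SemidirectProduct.ext (Subsingleton.elim _ _) (Subsingleton.elim _ _)
        rw [hg1]
        exact Subgroup.one_mem _
      · show (if n + n ≤ n then LA (I (n + n)) else LF (I (n + n - n))) = ⊤
        rw [if_neg (by omega)]
        have h1 : (I (n + n - n)).toSubbrace.subgroup = ⊤ := by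
          rw [Subgroup.eq_top_iff']
          intro g
          show g ∈ (I (n + n - n)).carrier
          have h3 : n + n - n = n := by omega
          rw [h3, htop]; trivial
        show Subgroup.comap _ _ = ⊤
        rw [h1, Subgroup.comap_top]
    · intro i
      show (if i ≤ n then LA (I i) else LF (I (i - n))).Normal
      split
      · exact hLAnorm (I i)
      · exact Subgroup.Normal.comap ⟨fun a ha g => (I (i - n)).mulConj_mem g ha⟩ _
    · intro i hi
      show (if i ≤ n then LA (I i) else LF (I (i - n)))
          ≤ (if i + 1 ≤ n then LA (I (i + 1)) else LF (I (i + 1 - n)))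
      by_cases h1 : i + 1 ≤ n
      · rw [if_pos (by omega), if_pos h1]
        exact Subgroup.map_mono (fun g hg => hchain i (by omega) hg)
      · by_cases h2 : i ≤ n
        · have h3 : i = n := by omega
          subst h3
          rw [if_pos h2, if_neg h1, hLAtop]
          refine Subgroup.comap_mono (fun g hg => ?_)
          show g ∈ (I (i + 1 - i)).carrier
          have hg' : g ∈ (I 0).carrier := hg
          have hg0 : g = 0 := by rwa [h0, Set.mem_singleton_iff] at hg' 
          rw [hg0]
          exact (I (i + 1 - i)).zero_mem
        · rw [if_neg h2, if_neg h1]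
          have h3 : i + 1 - n = (i - n) + 1 := by omega
          rw [h3]
          exact Subgroup.comap_mono (fun g hg => hchain (i - n) (by omega) hg)
    · intro i hi
      have hm0eq : ∀ j, (if j ≤ n then LA (I j) else LF (I (j - n)))
          = if j ≤ n then LA (I j) else LF (I (j - n)) := fun j => rfl
      by_cases h1 : i + 1 ≤ n
      · obtain ⟨x, hx, hgen⟩ := keyAdd i (by omega)
        simp only [if_pos h1, if_pos (show i ≤ n by omega)]
        refine ⟨SemidirectProduct.inl (Multiplicative.ofAdd x),
          Subgroup.mem_map.mpr ⟨Multiplicative.ofAdd x, hx, rfl⟩, ?_⟩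
        intro h hh
        obtain ⟨a, ha, rfl⟩ := Subgroup.mem_map.mp hh
        obtain ⟨k, hk⟩ := hgen (Multiplicative.toAdd a) ha
        refine ⟨k, ?_⟩
        have heq : (SemidirectProduct.inl (φ := φ) (Multiplicative.ofAdd x) ^ k)⁻¹ *
            SemidirectProduct.inl a
            = SemidirectProduct.inl ((Multiplicative.ofAdd x ^ k)⁻¹ * a) := by
          rw [map_mul, map_inv, map_zpow]
        rw [heq]
        refine Subgroup.mem_map.mpr ⟨(Multiplicative.ofAdd x ^ k)⁻¹ * a, ?_, rfl⟩
        show Multiplicative.toAdd ((Multiplicative.ofAdd x ^ k)⁻¹ * a) ∈ (I i).carrier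
        have h2 : Multiplicative.toAdd ((Multiplicative.ofAdd x ^ k)⁻¹ * a)
            = -(k • x) + Multiplicative.toAdd a := by simp
        rw [h2]; exact hk
      · obtain ⟨x, hx, hgen⟩ := key (i - n) (by omega)
        have hm1 : (if i + 1 ≤ n then LA (I (i + 1)) else LF (I (i + 1 - n)))
            = LF (I ((i - n) + 1)) := by
          rw [if_neg h1]
          have h3 : i + 1 - n = (i - n) + 1 := by omega
          rw [h3]
        have hm0 : (if i ≤ n then LA (I i) else LF (I (i - n))) = LF (I (i - n)) := by
          by_cases h2 : i ≤ n
          · have h3 : i = n := by omega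
            subst h3
            rw [if_pos h2, hLAtop, Nat.sub_self]
          · rw [if_neg h2]
        simp only [hm1, hm0]
        refine ⟨SemidirectProduct.inr x, ?_, ?_⟩
        · refine Subgroup.mem_comap.mpr ?_
          show SemidirectProduct.rightHom (SemidirectProduct.inr (φ := φ) x)
            ∈ (I ((i - n) + 1)).toSubbrace.subgroup
          rw [SemidirectProduct.rightHom_inr]
          exact hx
        · intro h hh
          have hh' : SemidirectProduct.rightHom h ∈ (I ((i - n) + 1)).carrier :=
            Subgroup.mem_comap.mp hh
          obtain ⟨k, hk⟩ := hgen _ hh'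
          refine ⟨k, Subgroup.mem_comap.mpr ?_⟩
          show SemidirectProduct.rightHom ((SemidirectProduct.inr (φ := φ) x ^ k)⁻¹ * h)
            ∈ (I (i - n)).toSubbrace.subgroup
          rw [map_mul, map_inv, map_zpow, SemidirectProduct.rightHom_inr]
          exact hk
  exact ⟨hG, hA, hM⟩

end SkewBrace
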